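/- arXiv:2005.10675 — 3 statements merged into one kernel-verified Lean document; each statement's English description precedes it below -/
import Mathlib

section
/- Let f : R^d → R be convex, L > 0, and suppose f̃*(v) = f*(v) − (1/(2L))‖v‖² defines a convex function. Let η̃ > 0 satisfy η̃/L < 1. Then for all x, prox_{η̃ f̃*}(x) = prox_{(η̃^{-1} − L^{-1})^{-1} f*}((1 − η̃ L^{-1})^{-1} x). Consequently, (1 − η̃ L^{-1}) prox_{η̃ f̃*}(x) = x − η̃ · prox_{(η̃^{-1} − L^{-1}) f}(η̃^{-1} x). -/
/-!
Since `f̃* = f* - ‖·‖² / (2L)` is convex, `f*` is `L⁻¹`-strongly convex. Completing the square,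
the prox objective of `η̃ f̃*` at `x` differs by a constant from that of `(η̃⁻¹ - L⁻¹)⁻¹ f*` at
`(1 - η̃ L⁻¹)⁻¹ x`; both are strictly convex, so they have the same unique minimiser.
For the second identity, the optimality condition of `s` says that
`u = (η̃⁻¹ - L⁻¹)⁻¹ (η̃⁻¹ x - s)` is a subgradient of `f` at `s`, hence `s` is a subgradient of `f*`
at `u` (Fenchel–Young), which is exactly the optimality condition for `u` to be the prox point of
`(η̃⁻¹ - L⁻¹)⁻¹ f*`.
-/

open Set Filter Topology RealInnerProductSpace

section Prox

variable {E : Type*} [NormedAddCommGroup E] [InnerProductSpace ℝ E]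

noncomputable def proxObjective (h : E → ℝ) (t : ℝ) (z : E) (v : E) : ℝ :=
  1 / (2 * t) * ‖v - z‖ ^ 2 + h v

theorem ConvexOn.strongConvexOn_proxObjective {h : E → ℝ} (hh : ConvexOn ℝ univ h) (t : ℝ)
    (z : E) : StrongConvexOn univ t⁻¹ (proxObjective h t z) := by
  rw [strongConvexOn_iff_convex]
  have hlin : ConvexOn ℝ univ fun v => -(t⁻¹ * ⟪v, z⟫) :=
    (-(t⁻¹ • (innerₛₗ ℝ).flip z)).convexOn convex_univ
  refine ((hh.add hlin).add_const (1 / (2 * t) * ‖z‖ ^ 2)).congr fun v _ => ?_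
  simp only [proxObjective, Pi.add_apply, norm_sub_sq_real]
  ring

theorem eq_of_isMinOn_proxObjective {h : E → ℝ} (hh : ConvexOn ℝ univ h) {t : ℝ} (ht : 0 < t)
    {z m₁ m₂ : E} (hm₁ : IsMinOn (proxObjective h t z) univ m₁)
    (hm₂ : IsMinOn (proxObjective h t z) univ m₂) : m₁ = m₂ :=
  ((hh.strongConvexOn_proxObjective t z).strictConvexOn (inv_pos.2 ht)).eq_of_isMinOn hm₁ hm₂
    trivial trivial

theorem isMinOn_proxObjective_of_subgradient {h : E → ℝ} {t : ℝ} (ht : 0 < t) {z m : E}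
    (hsub : ∀ v, h m + ⟪t⁻¹ • (z - m), v - m⟫ ≤ h v) : IsMinOn (proxObjective h t z) univ m := by
  intro v _
  have hsq : ‖v - z‖ ^ 2 = ‖m - z‖ ^ 2 - 2 * ⟪z - m, v - m⟫ + ‖v - m‖ ^ 2 := by
    rw [show v - z = (v - m) - (z - m) by abel, norm_sub_sq_real, real_inner_comm,
      norm_sub_rev m z]
    ring
  have hv := hsub v
  rw [real_inner_smul_left] at hv
  have hdiff : proxObjective h t z v - proxObjective h t z m =
      (h v - (h m + t⁻¹ * ⟪z - m, v - m⟫)) + ‖v - m‖ ^ 2 / (2 * t) := by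
    rw [proxObjective, proxObjective, hsq]
    field_simp
    ring
  have hN : 0 ≤ ‖v - m‖ ^ 2 / (2 * t) := by positivity
  show proxObjective h t z m ≤ proxObjective h t z v
  linarith

theorem IsMinOn.subgradient_of_proxObjective {h : E → ℝ} (hh : ConvexOn ℝ univ h) {t : ℝ}
    (ht : 0 < t) {z m : E} (hm : IsMinOn (proxObjective h t z) univ m) (v : E) :
    h m + ⟪t⁻¹ • (z - m), v - m⟫ ≤ h v := by
  rw [real_inner_smul_left]
  set K := ⟪z - m, v - m⟫
  set C := ‖v - m‖ ^ 2 / (2 * t)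
  -- compare `m` with the points `m + ε • (v - m)` of the segment towards `v`, then let `ε → 0`
  have hstep : ∀ ε ∈ Ioc (0 : ℝ) 1, h m + t⁻¹ * K ≤ h v + ε * C := by
    rintro ε ⟨hε, hε1⟩
    have hmin : proxObjective h t z m ≤ proxObjective h t z (m + ε • (v - m)) := hm trivial
    have hconv : h (m + ε • (v - m)) ≤ (1 - ε) * h m + ε * h v := by
      have := hh.2 (mem_univ m) (mem_univ v) (sub_nonneg.2 hε1) hε.le (sub_add_cancel 1 ε)
      rwa [show (1 - ε) • m + ε • v = m + ε • (v - m) by module] at this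
    have hsq : ‖m + ε • (v - m) - z‖ ^ 2 = ‖m - z‖ ^ 2 - 2 * ε * K + ε ^ 2 * ‖v - m‖ ^ 2 := by
      rw [show m + ε • (v - m) - z = ε • (v - m) - (z - m) by abel, norm_sub_sq_real,
        real_inner_smul_left, norm_smul, mul_pow, Real.norm_eq_abs, sq_abs, real_inner_comm,
        norm_sub_rev m z]
      ring
    rw [proxObjective, proxObjective, hsq] at hmin
    refine le_of_mul_le_mul_left ?_ hε
    have hdiff : ε * (h m + t⁻¹ * K) - ε * (h v + ε * C) = 1 / (2 * t) * ‖m - z‖ ^ 2 + h m -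
        (1 / (2 * t) * (‖m - z‖ ^ 2 - 2 * ε * K + ε ^ 2 * ‖v - m‖ ^ 2) +
          ((1 - ε) * h m + ε * h v)) := by
      simp only [C]
      field_simp
      ring
    linarith
  have hlim : Tendsto (fun ε => h v + ε * C) (𝓝[>] 0) (𝓝 (h v)) := by
    have : Continuous fun ε : ℝ => h v + ε * C := by fun_prop
    simpa using (this.tendsto 0).mono_left nhdsWithin_le_nhds
  exact ge_of_tendsto hlim (Filter.mem_of_superset (Ioc_mem_nhdsGT zero_lt_one) hstep)

theorem isMinOn_proxObjective_sub_sq_iff (h : E → ℝ) {t ρ : ℝ} (ht : t ≠ 0)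
    (htρ : 1 - t * ρ ≠ 0) (x m : E) :
    IsMinOn (proxObjective (fun v => h v - ρ / 2 * ‖v‖ ^ 2) t x) univ m ↔
      IsMinOn (proxObjective h (t⁻¹ - ρ)⁻¹ ((1 - t * ρ)⁻¹ • x)) univ m := by
  have hρ : t⁻¹ - ρ ≠ 0 := by
    rwa [← mul_ne_zero_iff_left ht, mul_sub, mul_inv_cancel₀ ht]
  have hshift : ∀ v, proxObjective h (t⁻¹ - ρ)⁻¹ ((1 - t * ρ)⁻¹ • x) v =
      proxObjective (fun v => h v - ρ / 2 * ‖v‖ ^ 2) t x v +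
        ((t⁻¹ - ρ) / 2 * (1 - t * ρ)⁻¹ ^ 2 - 1 / (2 * t)) * ‖x‖ ^ 2 := by
    intro v
    simp only [proxObjective, norm_sub_sq_real, real_inner_smul_right, norm_smul,
      Real.norm_eq_abs, mul_pow, sq_abs]
    field_simp
    ring
  simp only [isMinOn_univ_iff, hshift, add_le_add_iff_right]

theorem convex_setOf_bddAbove_inner_sub (f : E → ℝ) :
    Convex ℝ {y : E | BddAbove (range fun x => ⟪x, y⟫ - f x)} := by
  rintro a ⟨Ma, hMa⟩ b ⟨Mb, hMb⟩ θa θb hθa hθb hθ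
  refine ⟨θa * Ma + θb * Mb, ?_⟩
  rintro _ ⟨x, rfl⟩
  calc ⟪x, θa • a + θb • b⟫ - f x = θa * (⟪x, a⟫ - f x) + θb * (⟪x, b⟫ - f x) := by
        rw [inner_add_right, real_inner_smul_right, real_inner_smul_right]
        linear_combination f x * hθ
    _ ≤ θa * Ma + θb * Mb := by gcongr <;> [exact hMa ⟨x, rfl⟩; exact hMb ⟨x, rfl⟩]

/- A real-valued `fstar` can only be the conjugate in the junk sense `⨆ = 0` where the supremum is
unbounded. Beyond an unbounded point the supremum stays unbounded along the whole ray from a bounded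
point, so `fstar` would vanish at three equally spaced points, against strict convexity. -/
theorem bddAbove_inner_sub_of_strictConvexOn {f fstar : E → ℝ}
    (hconj : ∀ y, fstar y = ⨆ x, ⟪x, y⟫ - f x) (hstrict : StrictConvexOn ℝ univ fstar) {u : E}
    (hu : BddAbove (range fun x => ⟪x, u⟫ - f x)) (v : E) :
    BddAbove (range fun x => ⟪x, v⟫ - f x) := by
  by_contra hv
  have hvu : v ≠ u := by rintro rfl; exact hv hu
  set w : ℝ → E := fun τ => u + τ • (v - u)
  have hray : ∀ τ, 1 ≤ τ → fstar (w τ) = 0 := by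
    intro τ hτ
    rw [hconj]
    refine Real.iSup_of_not_bddAbove fun hw => hv ?_
    have hτ₀ : τ ≠ 0 := by positivity
    have := (convex_setOf_bddAbove_inner_sub f).add_smul_sub_mem hu hw
      ⟨inv_nonneg.2 (by positivity), inv_le_one_of_one_le₀ hτ⟩
    rwa [add_sub_cancel_left, smul_smul, inv_mul_cancel₀ hτ₀, one_smul, add_sub_cancel] at this
  have hmid : (1 / 2 : ℝ) • w 1 + (1 / 2 : ℝ) • w 3 = w 2 := by simp only [w]; module
  have hne : w 1 ≠ w 3 := by
    intro h
    have : (2 : ℝ) • (v - u) = 0 := by linear_combination (norm := module) -h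
    exact hvu (sub_eq_zero.1 ((smul_eq_zero.1 this).resolve_left two_ne_zero))
  have : fstar ((1 / 2 : ℝ) • w 1 + (1 / 2 : ℝ) • w 3) <
      (1 / 2 : ℝ) • fstar (w 1) + (1 / 2 : ℝ) • fstar (w 3) :=
    hstrict.2 trivial trivial hne (by norm_num) (by norm_num) (by norm_num)
  rw [hmid, hray 1 le_rfl, hray 2 (by norm_num), hray 3 (by norm_num)] at this
  simp at this

theorem conj_subgradient_of_subgradient {f fstar : E → ℝ}
    (hconj : ∀ y, fstar y = ⨆ x, ⟪x, y⟫ - f x) (hstrict : StrictConvexOn ℝ univ fstar) {s u : E}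
    (hsub : ∀ w, f s + ⟪u, w - s⟫ ≤ f w) (v : E) : fstar u + ⟪s, v - u⟫ ≤ fstar v := by
  have hbound : ∀ w, ⟪w, u⟫ - f w ≤ ⟪s, u⟫ - f s := fun w => by
    have := hsub w
    rw [inner_sub_right, real_inner_comm w u, real_inner_comm s u] at this
    linarith
  have hu : BddAbove (range fun w => ⟪w, u⟫ - f w) := ⟨_, forall_mem_range.2 hbound⟩
  have hfu : fstar u = ⟪s, u⟫ - f s := by
    rw [hconj]
    exact le_antisymm (ciSup_le hbound) (le_ciSup hu s)
  have hfv : ⟪s, v⟫ - f s ≤ fstar v := by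
    rw [hconj]
    exact le_ciSup (bddAbove_inner_sub_of_strictConvexOn hconj hstrict hu v) s
  rw [hfu, inner_sub_right]
  linarith

end Prox

theorem stmt4 {d : ℕ} (f fstar : EuclideanSpace ℝ (Fin d) → ℝ)
    (hf : ConvexOn ℝ Set.univ f)
    (hconj : ∀ y, fstar y = ⨆ x, ((inner ℝ x y : ℝ) - f x))
    (L : ℝ) (hL : 0 < L)
    (ftil : EuclideanSpace ℝ (Fin d) → ℝ)
    (hftil : ∀ v, ftil v = fstar v - 1 / (2 * L) * ‖v‖ ^ 2)
    (hconvftil : ConvexOn ℝ Set.univ ftil)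
    (ηt : ℝ) (hηt : 0 < ηt) (hratio : ηt / L < 1)
    (x p r s : EuclideanSpace ℝ (Fin d))
    (hp : IsMinOn (fun v => 1 / (2 * ηt) * ‖v - x‖ ^ 2 + ftil v) Set.univ p)
    (hr : IsMinOn
      (fun v => 1 / (2 * (ηt⁻¹ - L⁻¹)⁻¹) * ‖v - (1 - ηt * L⁻¹)⁻¹ • x‖ ^ 2 + fstar v)
      Set.univ r)
    (hs : IsMinOn (fun v => 1 / (2 * (ηt⁻¹ - L⁻¹)) * ‖v - ηt⁻¹ • x‖ ^ 2 + f v) Set.univ s) :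
    p = r ∧ (1 - ηt * L⁻¹) • p = x - ηt • s := by
  have hftil' : ftil = fun v => fstar v - L⁻¹ / 2 * ‖v‖ ^ 2 := by
    funext v
    rw [hftil]
    ring
  have hstrict : StrictConvexOn ℝ univ fstar :=
    (strongConvexOn_iff_convex.2 (hftil' ▸ hconvftil)).strictConvexOn (inv_pos.2 hL)
  have hηL : ηt < L := (div_lt_one hL).1 hratio
  have hLη : L - ηt ≠ 0 := (sub_pos.2 hηL).ne'
  have hμ : 0 < (ηt⁻¹ - L⁻¹)⁻¹ := inv_pos.2 (sub_pos.2 (inv_strictAnti₀ hηt hηL))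
  have hc : 1 - ηt * L⁻¹ ≠ 0 := by rw [← div_eq_mul_inv]; linarith
  have hp' : IsMinOn (proxObjective fstar (ηt⁻¹ - L⁻¹)⁻¹ ((1 - ηt * L⁻¹)⁻¹ • x)) univ p :=
    (isMinOn_proxObjective_sub_sq_iff fstar hηt.ne' hc x p).1 (hftil' ▸ hp)
  have hpr : p = r := eq_of_isMinOn_proxObjective hstrict.convexOn hμ hp' hr
  set u := (ηt⁻¹ - L⁻¹)⁻¹ • (ηt⁻¹ • x - s)
  have hsub_f : ∀ w, f s + ⟪u, w - s⟫ ≤ f w :=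
    hs.subgradient_of_proxObjective hf (inv_pos.1 hμ)
  have hu : IsMinOn (proxObjective fstar (ηt⁻¹ - L⁻¹)⁻¹ ((1 - ηt * L⁻¹)⁻¹ • x)) univ u := by
    refine isMinOn_proxObjective_of_subgradient hμ fun v => ?_
    convert conj_subgradient_of_subgradient hconj hstrict hsub_f v using 3
    simp only [u]
    match_scalars
    · field_simp
      ring
    · field_simp
  have hru : r = u := eq_of_isMinOn_proxObjective hstrict.convexOn hμ hr hu
  refine ⟨hpr, ?_⟩
  rw [hpr, hru]
  simp only [u]
  match_scalars <;> field_simp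
end

section
/- Let B_0 > 0, S > 0, A_0 ≥ 0, and define recursively A_{t+1} = A_t + (B_0/(2S²))(1 + √(1 + 4S²B_0^{-1}A_t)). Then for all t ≥ 0, A_t ≥ A_0 + B_0 t²/(4S²); in particular A_t ≥ B_0 t²/(4S²). -/
/-!
Writing `c = B₀ / (4 S²)`, the recursion reads `A (t + 1) = A t + 2c (1 + √(1 + A t / c))`.
If `A t ≥ A 0 + c t² ≥ c t²` then `√(1 + A t / c) ≥ t`, so the increment is at least
`c (2t + 1) = c (t + 1)² - c t²`, and the bound propagates by induction.
-/

theorem mul_le_mul_sqrt_one_add_inv_mul {c a t : ℝ} (hc : 0 ≤ c) (h : c * t ^ 2 ≤ a) :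
    c * t ≤ c * √(1 + c⁻¹ * a) := by
  rcases hc.eq_or_lt with rfl | hc
  · simp
  gcongr
  exact Real.le_sqrt_of_sq_le (by linarith [(le_inv_mul_iff₀ hc).mpr h])

theorem add_mul_sq_le_of_sqrt_step {c : ℝ} {A : ℕ → ℝ} (hc : 0 ≤ c) (hA0 : 0 ≤ A 0)
    (hrec : ∀ t, A (t + 1) = A t + 2 * c * (1 + √(1 + c⁻¹ * A t))) (t : ℕ) :
    A 0 + c * t ^ 2 ≤ A t := by
  induction t with
  | zero => simp
  | succ n ih =>
    have hsqrt := mul_le_mul_sqrt_one_add_inv_mul hc (a := A n) (t := n) (by linarith)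
    rw [hrec]
    push_cast
    linarith

theorem stmt7_general (B0 S : ℝ) (hB0 : 0 < B0) (A : ℕ → ℝ) (hA0 : 0 ≤ A 0)
    (hrec : ∀ t, A (t + 1) =
      A t + B0 / (2 * S ^ 2) * (1 + Real.sqrt (1 + 4 * S ^ 2 / B0 * A t))) :
    ∀ t : ℕ, A 0 + B0 * (t : ℝ) ^ 2 / (4 * S ^ 2) ≤ A t ∧
      B0 * (t : ℝ) ^ 2 / (4 * S ^ 2) ≤ A t := by
  intro t
  set c := B0 / (4 * S ^ 2) with hc_def
  have hc : 0 ≤ c := div_nonneg hB0.le (by positivity)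
  have hrec' : ∀ t, A (t + 1) = A t + 2 * c * (1 + √(1 + c⁻¹ * A t)) := by
    intro t
    rw [hrec, hc_def, inv_div]
    ring
  have hbound := add_mul_sq_le_of_sqrt_step hc hA0 hrec' t
  have hct : B0 * (t : ℝ) ^ 2 / (4 * S ^ 2) = c * t ^ 2 := by ring
  rw [hct]
  exact ⟨hbound, by linarith⟩

theorem stmt7 (B0 S : ℝ) (hB0 : 0 < B0) (hS : 0 < S) (A : ℕ → ℝ) (hA0 : 0 ≤ A 0)
    (hrec : ∀ t, A (t + 1) =
      A t + B0 / (2 * S ^ 2) * (1 + Real.sqrt (1 + 4 * S ^ 2 / B0 * A t))) :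
    ∀ t : ℕ, A 0 + B0 * (t : ℝ) ^ 2 / (4 * S ^ 2) ≤ A t ∧
      B0 * (t : ℝ) ^ 2 / (4 * S ^ 2) ≤ A t :=
  stmt7_general B0 S hB0 A hA0 hrec
end

section
/- Let 0 ≤ α ≤ 1, n ≥ 2, and consider the polynomial Q(θ) = sin(nθ) − (1−α) sin((n−1)θ) for θ ∈ (0, π/2]. Then any root θ of Q in (0, π/2] satisfies θ ≥ π/(2n). -/
open Real

theorem mul_sin_sub_lt_sin {c x θ : ℝ} (hc : c ≤ 1) (hθ : 0 < θ) (hθx : θ ≤ x)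
    (hx : x ≤ π / 2) : c * sin (x - θ) < sin x := by
  have hsub_nonneg : 0 ≤ sin (x - θ) :=
    sin_nonneg_of_nonneg_of_le_pi (by linarith) (by linarith [pi_pos])
  have hsub_lt : sin (x - θ) < sin x :=
    strictMonoOn_sin ⟨by linarith [pi_pos], by linarith⟩ ⟨by linarith [pi_pos], hx⟩
      (by linarith)
  nlinarith

theorem stmt11_general (α : ℝ) (hα0 : 0 ≤ α) (n : ℕ)
    (θ : ℝ) (hθ : θ ∈ Set.Ioc 0 (Real.pi / 2))
    (hroot : Real.sin (n * θ) - (1 - α) * Real.sin (((n - 1 : ℕ) : ℝ) * θ) = 0) :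
    Real.pi / (2 * n) ≤ θ := by
  obtain ⟨hθ0, -⟩ := hθ
  rcases Nat.eq_zero_or_pos n with rfl | hn
  · simpa using hθ0.le -- the bound is `π / 0 = 0`
  by_contra! hsmall
  have hnθ : n * θ ≤ π / 2 := by
    rw [lt_div_iff₀ (by positivity)] at hsmall
    linarith
  have hθnθ : θ ≤ n * θ := le_mul_of_one_le_left hθ0.le (by exact_mod_cast hn)
  have hpred : ((n - 1 : ℕ) : ℝ) * θ = n * θ - θ := by
    rw [Nat.cast_sub hn, Nat.cast_one, sub_mul, one_mul]
  rw [hpred] at hroot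
  linarith [mul_sin_sub_lt_sin (c := 1 - α) (by linarith) hθ0 hθnθ hnθ]

theorem stmt11 (α : ℝ) (hα0 : 0 ≤ α) (hα1 : α ≤ 1) (n : ℕ) (hn : 2 ≤ n)
    (θ : ℝ) (hθ : θ ∈ Set.Ioc 0 (Real.pi / 2))
    (hroot : Real.sin (n * θ) - (1 - α) * Real.sin (((n - 1 : ℕ) : ℝ) * θ) = 0) :
    Real.pi / (2 * n) ≤ θ :=
  stmt11_general α hα0 n θ hθ hroot
end
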